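/- For any composition A of the operators S and R, there is a size-preserving bijection between the set of permutations sorted by S ∘ A and the set of permutations sorted by S ∘ R ∘ A; in particular these two sets contain equally many permutations of each length n. -/

import Mathlib

/-- Stack sorting with fuel (fuel = length always suffices). -/
def stackSortAux : ℕ → List ℕ → List ℕ
  | 0, _ => []
  | _ + 1, [] => []
  | fuel + 1, x :: xs =>
    let l := x :: xs
    let m := l.foldr max 0
    stackSortAux fuel (l.takeWhile (· ≠ m)) ++
      stackSortAux fuel ((l.dropWhile (· ≠ m)).tail) ++ [m]

/-- The stack sorting operator `S`: `S(ε) = ε` and `S(α n β) = S(α) S(β) n`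
where `n` is the maximum element. -/
def stackSort (l : List ℕ) : List ℕ := stackSortAux l.length l

/-- `σ` avoids the pattern 231. -/
def Avoids231 (σ : List ℕ) : Prop :=
  ¬ ∃ i j k, i < j ∧ j < k ∧ k < σ.length ∧
      σ.getD k 0 < σ.getD i 0 ∧ σ.getD i 0 < σ.getD j 0

/-- `σ` avoids the pattern 132. -/
def Avoids132 (σ : List ℕ) : Prop :=
  ¬ ∃ i j k, i < j ∧ j < k ∧ k < σ.length ∧
      σ.getD i 0 < σ.getD k 0 ∧ σ.getD k 0 < σ.getD j 0

/-- Binary trees with natural number labels. -/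
inductive BTree where
  | leaf : BTree
  | node : BTree → ℕ → BTree → BTree

def BTree.inorder : BTree → List ℕ
  | .leaf => []
  | .node l n r => l.inorder ++ [n] ++ r.inorder

def BTree.postorder : BTree → List ℕ
  | .leaf => []
  | .node l n r => l.postorder ++ r.postorder ++ [n]

/-- A tree is decreasing when labels strictly decrease from root to leaves. -/
def BTree.Decreasing : BTree → Prop
  | .leaf => True
  | .node l n r =>
      l.Decreasing ∧ r.Decreasing ∧
      (∀ x ∈ l.inorder, x < n) ∧ (∀ x ∈ r.inorder, x < n)

/-- The underlying unlabeled shape of a tree (labels replaced by `0`). -/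
def BTree.shape : BTree → BTree
  | .leaf => .leaf
  | .node l _ r => .node l.shape 0 r.shape

def BTree.map (f : ℕ → ℕ) : BTree → BTree
  | .leaf => .leaf
  | .node l n r => .node (l.map f) (f n) (r.map f)

/-- Labels on the rightmost branch from the root. -/
def BTree.rightBranch : BTree → List ℕ
  | .leaf => []
  | .node _ n r => n :: r.rightBranch

/-- Labels on the leftmost branch from the root. -/
def BTree.leftBranch : BTree → List ℕ
  | .leaf => []
  | .node l n _ => n :: l.leftBranch

def TinAux : ℕ → List ℕ → BTree
  | 0, _ => .leaf
  | _ + 1, [] => .leaf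
  | fuel + 1, x :: xs =>
    let l := x :: xs
    let m := l.foldr max 0
    .node (TinAux fuel (l.takeWhile (· ≠ m))) m
          (TinAux fuel ((l.dropWhile (· ≠ m)).tail))

/-- The decreasing binary tree whose in-order reading is `l`. -/
def Tin (l : List ℕ) : BTree := TinAux l.length l

def PpermAux : ℕ → List ℕ → List ℕ
  | 0, _ => []
  | _ + 1, [] => []
  | fuel + 1, x :: xs =>
    let l := x :: xs
    let m := l.foldr max 0
    let α := l.takeWhile (· ≠ m)
    let β := (l.dropWhile (· ≠ m)).tail
    (PpermAux fuel α).map (· + β.length) ++ [m] ++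
      PpermAux fuel (β.map (· - α.length))

/-- The bijection `P` from 231-avoiding to 132-avoiding permutations,
`P(ε) = ε` and `P(α ⊕ (1 ⊖ β)) = (P(α) ⊕ 1) ⊖ P(β)`. -/
def Pperm (l : List ℕ) : List ℕ := PpermAux l.length l

/-- Direct sum of permutations: `α ⊕ β`. -/
def osum (α β : List ℕ) : List ℕ := α ++ β.map (· + α.length)

/-- Skew sum of permutations: `α ⊖ β`. -/
def ossum (α β : List ℕ) : List ℕ := α.map (· + β.length) ++ β

def lrP : ℕ → List ℕ × List ℕ
  | 0 => ([], [])
  | m + 1 => (ossum [1] (lrP m).2, osum (lrP m).1 [1])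

/-- `λ_n`: `λ_{m+1} = 1 ⊖ ρ_m`. -/
def lamP (n : ℕ) : List ℕ := (lrP n).1

/-- `ρ_n`: `ρ_{m+1} = λ_m ⊕ 1`. -/
def rhoP (n : ℕ) : List ℕ := (lrP n).2

/-- `s` and `p` are order isomorphic lists. -/
def OrderIsoList (s p : List ℕ) : Prop :=
  s.length = p.length ∧
  ∀ i j, i < s.length → j < s.length →
    (s.getD i 0 < s.getD j 0 ↔ p.getD i 0 < p.getD j 0)

/-- `σ` contains the pattern `π`. -/
def Contains (σ π : List ℕ) : Prop :=
  ∃ s : List ℕ, s.Sublist σ ∧ OrderIsoList s π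

/-- The up-down word of a permutation (`true` = ascent `u`, `false` = descent `d`). -/
def updown (l : List ℕ) : List Bool :=
  (l.zip l.tail).map (fun p => decide (p.1 < p.2))

/-- No value larger than `max x y` occurs (strictly) between `x` and `y` in `l`. -/
def NoLargerBetween (l : List ℕ) (x y : ℕ) : Prop :=
  ∀ i j k, i < j → j < k → k < l.length →
    ((l.getD i 0 = x ∧ l.getD k 0 = y) ∨ (l.getD i 0 = y ∧ l.getD k 0 = x)) →
    l.getD j 0 ≤ max x y

/-- The basic operators: stack sorting `S` and reversal `R`. -/
inductive SOp where
  | s : SOp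
  | r : SOp

def applyOp : SOp → List ℕ → List ℕ
  | .s => stackSort
  | .r => List.reverse

/-- A composition of operators from `{S, R}`. -/
def applyOps (ops : List SOp) : List ℕ → List ℕ :=
  ops.foldr (fun op f => applyOp op ∘ f) id

/-- `i` is the position of a left-to-right maximum of `l`. -/
def LRmaxPos (l : List ℕ) (i : ℕ) : Prop :=
  i < l.length ∧ ∀ j, j < i → l.getD j 0 < l.getD i 0

/-- `i` is the position of a right-to-left maximum of `l`. -/
def RLmaxPos (l : List ℕ) (i : ℕ) : Prop :=
  i < l.length ∧ ∀ j, i < j → j < l.length → l.getD j 0 < l.getD i 0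

/-- The reverse Zeilberger statistic: the largest `k` such that
`(n-k+1) … (n-1) n` is a subword of `l`, where `n = l.length`. -/
noncomputable def Rzeil (l : List ℕ) : ℕ :=
  sSup {k | (List.range' (l.length - k + 1) k).Sublist l}

/-!
`stackSort l` is the postorder reading of the decreasing binary tree `Tin l`, whose inorder
reading is `l`, and reversing a permutation mirrors its tree. So the `stackSort`-preimages of `w`
correspond to the tree shapes whose postorder labelling by `w` is decreasing, and which shapes
qualify depends only on the shape of `Tin w`. By induction on `A`, the number of `A`-preimages of
a permutation `w` therefore depends only on the shape of `Tin w`.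

Every shape of size `n` labelled in postorder by the identity is decreasing, so the permutations
sorted by `S ∘ A` are counted by summing, over all shapes `t`, the number of `A`-preimages of the
permutation with tree shape `t` and `stackSort` image the identity; for `S ∘ R ∘ A` one counts the
preimages of its reverse, whose tree has shape `t.mirror`. Reindexing by `t ↦ t.mirror` matches
the two sums term by term, and bijections between the equinumerous sets of each length glue into
a length-preserving bijection.
-/
theorem foldr_max_mem {l : List ℕ} (hl : l ≠ []) : l.foldr max 0 ∈ l :=
  List.maximum_mem (List.foldr_max_of_ne_nil (α := ℕ) hl).symm

theorem foldr_max_append_cons {α β : List ℕ} {m : ℕ} (hα : ∀ x ∈ α, x < m)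
    (hβ : ∀ x ∈ β, x ≤ m) : (α ++ m :: β).foldr max 0 = m := by
  refine le_antisymm (List.max_le_of_forall_le (α := ℕ) _ _ fun x hx => ?_)
    (List.le_max_of_le (α := ℕ) (List.mem_append_right α List.mem_cons_self) le_rfl)
  simp only [List.mem_append, List.mem_cons] at hx
  rcases hx with hx | rfl | hx
  exacts [(hα x hx).le, le_rfl, hβ x hx]

theorem takeWhile_ne_append_cons {α β : List ℕ} {m : ℕ} (hα : ∀ x ∈ α, x < m) :
    (α ++ m :: β).takeWhile (· ≠ m) = α := by
  rw [List.takeWhile_append_of_pos (by simpa using fun x hx => (hα x hx).ne),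
    List.takeWhile_cons_of_neg (by simp), List.append_nil]

theorem dropWhile_ne_append_cons {α β : List ℕ} {m : ℕ} (hα : ∀ x ∈ α, x < m) :
    (α ++ m :: β).dropWhile (· ≠ m) = m :: β := by
  rw [List.dropWhile_append_of_pos (by simpa using fun x hx => (hα x hx).ne),
    List.dropWhile_cons_of_neg (by simp)]

theorem exists_eq_append_cons_max {l : List ℕ} (hl : l ≠ []) :
    ∃ α m β, l = α ++ m :: β ∧ (∀ x ∈ α, x < m) ∧ ∀ x ∈ β, x ≤ m := by
  set m := l.foldr max 0
  have hle : ∀ x ∈ l, x ≤ m := fun x hx => List.le_max_of_le (α := ℕ) hx le_rfl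
  obtain ⟨y, β, hyβ⟩ := List.exists_cons_of_ne_nil (l := l.dropWhile (· ≠ m)) fun h => by
    simpa using List.dropWhile_eq_nil_iff.1 h m (foldr_max_mem hl)
  have hy : y = m := by
    have h := List.head?_dropWhile_not (· ≠ m) l
    rw [hyβ] at h
    simpa using h
  have hl' : l = l.takeWhile (· ≠ m) ++ m :: β := by
    have h := (List.takeWhile_append_dropWhile (p := (· ≠ m)) (l := l)).symm
    rwa [hyβ, hy] at h
  refine ⟨_, m, β, hl', fun x hx => ?_, fun x hx => hle x (by rw [hl']; simp [hx])⟩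
  exact lt_of_le_of_ne (hle x ((List.takeWhile_sublist _).subset hx))
    (by simpa using List.mem_takeWhile_imp hx)

theorem maxSplit_induction {P : List ℕ → Prop} (nil : P [])
    (split : ∀ α m β, (∀ x ∈ α, x < m) → (∀ x ∈ β, x ≤ m) → P α → P β → P (α ++ m :: β))
    (l : List ℕ) : P l := by
  induction h : l.length using Nat.strong_induction_on generalizing l with
  | _ n ih =>
    rcases eq_or_ne l [] with rfl | hl
    · exact nil
    obtain ⟨α, m, β, rfl, hα, hβ⟩ := exists_eq_append_cons_max hl
    simp only [List.length_append, List.length_cons] at h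
    exact split α m β hα hβ (ih _ (by omega) α rfl) (ih _ (by omega) β rfl)

section MaxSplit

variable {α β : List ℕ} {m : ℕ}

theorem stackSortAux_succ_append_cons (f : ℕ) (hα : ∀ x ∈ α, x < m) (hβ : ∀ x ∈ β, x ≤ m) :
    stackSortAux (f + 1) (α ++ m :: β) = stackSortAux f α ++ stackSortAux f β ++ [m] := by
  obtain ⟨x, xs, hx⟩ := List.exists_cons_of_ne_nil (l := α ++ m :: β) (by simp)
  rw [hx]
  simp only [stackSortAux]
  rw [← hx, foldr_max_append_cons hα hβ, takeWhile_ne_append_cons hα,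
    dropWhile_ne_append_cons hα, List.tail_cons]

theorem TinAux_succ_append_cons (f : ℕ) (hα : ∀ x ∈ α, x < m) (hβ : ∀ x ∈ β, x ≤ m) :
    TinAux (f + 1) (α ++ m :: β) = .node (TinAux f α) m (TinAux f β) := by
  obtain ⟨x, xs, hx⟩ := List.exists_cons_of_ne_nil (l := α ++ m :: β) (by simp)
  rw [hx]
  simp only [TinAux]
  rw [← hx, foldr_max_append_cons hα hβ, takeWhile_ne_append_cons hα,
    dropWhile_ne_append_cons hα, List.tail_cons]

theorem stackSortAux_eq_stackSort (l : List ℕ) :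
    ∀ f, l.length ≤ f → stackSortAux f l = stackSort l := by
  induction l using maxSplit_induction with
  | nil => rintro (_ | _) _ <;> rfl
  | split α m β hα hβ ihα ihβ =>
    rintro (_ | f) hf
    · simp at hf
    simp only [List.length_append, List.length_cons] at hf
    rw [stackSort, List.length_append, List.length_cons, ← add_assoc,
      stackSortAux_succ_append_cons _ hα hβ, stackSortAux_succ_append_cons _ hα hβ,
      ihα f (by omega), ihβ f (by omega), ihα _ (by omega), ihβ _ (by omega)]

theorem TinAux_eq_Tin (l : List ℕ) : ∀ f, l.length ≤ f → TinAux f l = Tin l := by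
  induction l using maxSplit_induction with
  | nil => rintro (_ | _) _ <;> rfl
  | split α m β hα hβ ihα ihβ =>
    rintro (_ | f) hf
    · simp at hf
    simp only [List.length_append, List.length_cons] at hf
    rw [Tin, List.length_append, List.length_cons, ← add_assoc,
      TinAux_succ_append_cons _ hα hβ, TinAux_succ_append_cons _ hα hβ,
      ihα f (by omega), ihβ f (by omega), ihα _ (by omega), ihβ _ (by omega)]

theorem stackSort_append_cons (hα : ∀ x ∈ α, x < m) (hβ : ∀ x ∈ β, x ≤ m) :
    stackSort (α ++ m :: β) = stackSort α ++ stackSort β ++ [m] := by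
  rw [stackSort, List.length_append, List.length_cons, ← add_assoc,
    stackSortAux_succ_append_cons _ hα hβ, stackSortAux_eq_stackSort α _ (by omega),
    stackSortAux_eq_stackSort β _ (by omega)]

theorem Tin_append_cons (hα : ∀ x ∈ α, x < m) (hβ : ∀ x ∈ β, x ≤ m) :
    Tin (α ++ m :: β) = .node (Tin α) m (Tin β) := by
  rw [Tin, List.length_append, List.length_cons, ← add_assoc,
    TinAux_succ_append_cons _ hα hβ, TinAux_eq_Tin α _ (by omega), TinAux_eq_Tin β _ (by omega)]

end MaxSplit

namespace BTree

def size : BTree → ℕ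
  | .leaf => 0
  | .node l _ r => l.size + r.size + 1

def mirror : BTree → BTree
  | .leaf => .leaf
  | .node l n r => .node r.mirror n l.mirror

@[simp] theorem length_inorder (T : BTree) : T.inorder.length = T.size := by
  induction T with
  | leaf => rfl
  | node l n r ihl ihr => simp [inorder, size, ihl, ihr]; omega

@[simp] theorem length_postorder (T : BTree) : T.postorder.length = T.size := by
  induction T with
  | leaf => rfl
  | node l n r ihl ihr => simp [postorder, size, ihl, ihr]; omega

@[simp] theorem size_shape (T : BTree) : T.shape.size = T.size := by
  induction T with
  | leaf => rfl
  | node l n r ihl ihr => simp [shape, size, ihl, ihr]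

@[simp] theorem shape_shape (T : BTree) : T.shape.shape = T.shape := by
  induction T with
  | leaf => rfl
  | node l n r ihl ihr => simp [shape, ihl, ihr]

theorem shape_mirror (T : BTree) : T.mirror.shape = T.shape.mirror := by
  induction T with
  | leaf => rfl
  | node l n r ihl ihr => simp [mirror, shape, ihl, ihr]

@[simp] theorem mirror_mirror (T : BTree) : T.mirror.mirror = T := by
  induction T with
  | leaf => rfl
  | node l n r ihl ihr => simp [mirror, ihl, ihr]

instance decidableDecreasing : (T : BTree) → Decidable T.Decreasing
  | .leaf => isTrue trivial
  | .node l _ r =>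
    haveI := decidableDecreasing l
    haveI := decidableDecreasing r
    inferInstanceAs (Decidable (_ ∧ _ ∧ _ ∧ _))

instance decEq : DecidableEq BTree
  | .leaf, .leaf => isTrue rfl
  | .leaf, .node .. => isFalse nofun
  | .node .., .leaf => isFalse nofun
  | .node l n r, .node l' n' r' =>
    haveI := decEq l l'
    haveI := decEq r r'
    decidable_of_iff (l = l' ∧ n = n' ∧ r = r') (by simp)

theorem shape_eq_leaf_iff {T : BTree} : T.shape = .leaf ↔ T = .leaf := by
  cases T <;> simp [shape]

theorem inorder_perm_postorder (T : BTree) : T.inorder.Perm T.postorder := by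
  induction T with
  | leaf => rfl
  | node l n r ihl ihr =>
    simp only [inorder, postorder, List.append_assoc]
    exact ihl.append (List.perm_append_comm.trans (ihr.append_right [n]))

def labelPostorder : BTree → List ℕ → BTree
  | .leaf, _ => .leaf
  | .node l _ r, w =>
      .node (l.labelPostorder (w.take l.size)) (w.getD (l.size + r.size) 0)
        (r.labelPostorder ((w.drop l.size).take r.size))

@[simp] theorem shape_labelPostorder (t : BTree) (w : List ℕ) :
    (t.labelPostorder w).shape = t.shape := by
  induction t generalizing w with
  | leaf => rfl
  | node l n r ihl ihr => simp [labelPostorder, shape, ihl, ihr]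

theorem postorder_labelPostorder {t : BTree} {w : List ℕ} (hw : w.length = t.size) :
    (t.labelPostorder w).postorder = w := by
  induction t generalizing w with
  | leaf => exact (List.length_eq_zero_iff.1 hw).symm
  | node l n r ihl ihr =>
    simp only [size] at hw
    rw [labelPostorder, postorder, ihl (by simp; omega), ihr (by simp; omega),
      ← List.take_add, List.getD_eq_getElem _ _ (by omega)]
    conv_rhs => rw [← List.take_append_drop (l.size + r.size) w]
    rw [List.drop_eq_getElem_cons (by omega), List.drop_eq_nil_of_le (by omega)]

theorem labelPostorder_shape_postorder (T : BTree) : T.shape.labelPostorder T.postorder = T := by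
  induction T with
  | leaf => rfl
  | node l n r ihl ihr =>
    have hget : (l.postorder ++ r.postorder ++ [n]).getD (l.size + r.size) 0 = n := by
      rw [List.getD_eq_getElem _ _ (by simp), List.getElem_append_right (by simp)]
      simp
    simp only [shape, labelPostorder, postorder, size_shape, hget]
    rw [List.append_assoc, ← length_postorder l, List.take_left, List.drop_left,
      ← length_postorder r, List.take_left, ihl, ihr]

theorem inorder_labelPostorder_perm {t : BTree} {w : List ℕ} (hw : w.length = t.size) :
    (t.labelPostorder w).inorder.Perm w := by
  simpa only [postorder_labelPostorder hw] using inorder_perm_postorder (t.labelPostorder w)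

theorem decreasing_labelPostorder_node_iff {l r : BTree} {c : ℕ} {w : List ℕ}
    (hw : w.length = l.size + r.size + 1) :
    ((node l c r).labelPostorder w).Decreasing ↔
      (l.labelPostorder (w.take l.size)).Decreasing ∧
      (r.labelPostorder ((w.drop l.size).take r.size)).Decreasing ∧
      ∀ x ∈ w.take (l.size + r.size), x < w.getD (l.size + r.size) 0 := by
  have hmem_l : ∀ x, x ∈ (l.labelPostorder (w.take l.size)).inorder ↔ x ∈ w.take l.size :=
    fun _ => (inorder_labelPostorder_perm (by simp; omega)).mem_iff
  have hmem_r : ∀ x, x ∈ (r.labelPostorder ((w.drop l.size).take r.size)).inorder ↔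
      x ∈ (w.drop l.size).take r.size :=
    fun _ => (inorder_labelPostorder_perm (by simp; omega)).mem_iff
  simp only [labelPostorder, Decreasing, hmem_l, hmem_r, List.take_add, List.mem_append]
  constructor
  · rintro ⟨hl, hr, hlt, hrt⟩
    exact ⟨hl, hr, fun x hx => hx.elim (hlt x) (hrt x)⟩
  · rintro ⟨hl, hr, hlt⟩
    exact ⟨hl, hr, fun x hx => hlt x (.inl hx), fun x hx => hlt x (.inr hx)⟩

theorem decreasing_labelPostorder_of_pairwise {t : BTree} {w : List ℕ} (hw : w.length = t.size)
    (hs : w.Pairwise (· < ·)) : (t.labelPostorder w).Decreasing := by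
  induction t generalizing w with
  | leaf => trivial
  | node l n r ihl ihr =>
    simp only [size] at hw
    refine (decreasing_labelPostorder_node_iff hw).2
      ⟨ihl (by simp; omega) (hs.sublist (List.take_sublist _ _)),
        ihr (by simp; omega) (hs.sublist ((List.take_sublist _ _).trans (List.drop_sublist _ _))),
        fun x hx => ?_⟩
    obtain ⟨i, hi, rfl⟩ := List.getElem_of_mem hx
    rw [List.getElem_take, List.getD_eq_getElem _ _ (by omega)]
    exact List.pairwise_iff_getElem.1 hs _ _ _ _ (by simp at hi; omega)

end BTree

open BTree

@[simp] theorem inorder_Tin (l : List ℕ) : (Tin l).inorder = l := by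
  induction l using maxSplit_induction with
  | nil => rfl
  | split α m β hα hβ ihα ihβ => simp [Tin_append_cons hα hβ, inorder, ihα, ihβ]

theorem postorder_Tin (l : List ℕ) : (Tin l).postorder = stackSort l := by
  induction l using maxSplit_induction with
  | nil => rfl
  | split α m β hα hβ ihα ihβ =>
    rw [Tin_append_cons hα hβ, stackSort_append_cons hα hβ, postorder, ihα, ihβ]

@[simp] theorem size_Tin (l : List ℕ) : (Tin l).size = l.length := by
  rw [← length_inorder, inorder_Tin]

theorem stackSort_perm (l : List ℕ) : (stackSort l).Perm l := by
  simpa [postorder_Tin] using (inorder_perm_postorder (Tin l)).symm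

theorem length_eq_of_shape_Tin_eq {w w' : List ℕ} (h : (Tin w).shape = (Tin w').shape) :
    w.length = w'.length := by
  simpa using congrArg size h

theorem decreasing_Tin {l : List ℕ} (hl : l.Nodup) : (Tin l).Decreasing := by
  induction l using maxSplit_induction with
  | nil => trivial
  | split α m β hα hβ ihα ihβ =>
    have hmβ : m ∉ β := fun h => (List.nodup_middle.1 hl).notMem (List.mem_append_right α h)
    rw [Tin_append_cons hα hβ]
    refine ⟨ihα (hl.sublist (by simp)), ihβ (hl.sublist (by simp)), by simpa using hα,
      fun x hx => lt_of_le_of_ne (hβ x (by simpa using hx)) ?_⟩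
    rintro rfl
    exact hmβ (by simpa using hx)

theorem Tin_inorder {T : BTree} (hT : T.Decreasing) : Tin T.inorder = T := by
  induction T with
  | leaf => rfl
  | node l n r ihl ihr =>
    obtain ⟨hl, hr, hln, hrn⟩ := hT
    rw [inorder, List.append_assoc, List.singleton_append,
      Tin_append_cons hln fun x hx => (hrn x hx).le, ihl hl, ihr hr]

theorem Tin_reverse {l : List ℕ} (hl : l.Nodup) : Tin l.reverse = (Tin l).mirror := by
  induction l using maxSplit_induction with
  | nil => rfl
  | split α m β hα hβ ihα ihβ =>
    have hmβ : m ∉ β := fun h => (List.nodup_middle.1 hl).notMem (List.mem_append_right α h)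
    have hβ' : ∀ x ∈ β.reverse, x < m := fun x hx =>
      lt_of_le_of_ne (hβ x (List.mem_reverse.1 hx)) fun h => hmβ (h ▸ List.mem_reverse.1 hx)
    rw [List.reverse_append, List.reverse_cons, List.append_assoc, List.singleton_append,
      Tin_append_cons hβ' fun x hx => (hα x (List.mem_reverse.1 hx)).le, Tin_append_cons hα hβ,
      mirror, ihα (hl.sublist (by simp)), ihβ (hl.sublist (by simp))]

theorem shape_Tin_append_cons {α β : List ℕ} {m : ℕ} (hα : ∀ x ∈ α, x < m)
    (hβ : ∀ x ∈ β, x ≤ m) : (Tin (α ++ m :: β)).shape = .node (Tin α).shape 0 (Tin β).shape := by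
  rw [Tin_append_cons hα hβ, shape]

theorem Tin_eq_leaf_iff {l : List ℕ} : Tin l = .leaf ↔ l = [] :=
  ⟨fun h => by simpa [h, inorder] using (inorder_Tin l).symm, fun h => h ▸ rfl⟩

theorem forall_take_lt_getD_iff_shape_Tin {w : List ℕ} {k : ℕ} (hw : w.length = k + 1) :
    (∀ x ∈ w.take k, x < w.getD k 0) ↔ ∃ a, (Tin w).shape = .node a 0 .leaf := by
  obtain ⟨u, x, rfl⟩ := (List.eq_nil_or_concat w).resolve_left (by rintro rfl; simp at hw)
  obtain rfl : u.length = k := by simpa using hw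
  rw [List.concat_eq_append, List.take_left, show (u ++ [x]).getD u.length 0 = x by simp]
  refine ⟨fun hu => ⟨_, shape_Tin_append_cons hu (by simp)⟩, fun ⟨a, ha⟩ => ?_⟩
  obtain ⟨α, m, β, hsplit, hα, hβ⟩ := exists_eq_append_cons_max (l := u ++ [x]) (by simp)
  rw [hsplit, shape_Tin_append_cons hα hβ] at ha
  obtain rfl : β = [] := Tin_eq_leaf_iff.1 (shape_eq_leaf_iff.1 (BTree.node.inj ha).2.2)
  obtain ⟨rfl, h⟩ := List.append_inj' hsplit rfl
  obtain rfl : x = m := by simpa using h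
  exact hα

theorem ne_nil_of_shape_Tin_eq {α β w : List ℕ} {m : ℕ} (hα : ∀ x ∈ α, x < m)
    (hβ : ∀ x ∈ β, x ≤ m) (h : (Tin (α ++ m :: β)).shape = (Tin w).shape) : w ≠ [] := by
  rintro rfl
  rw [shape_Tin_append_cons hα hβ] at h
  cases h

theorem shape_Tin_take_eq {w w' : List ℕ} (h : (Tin w).shape = (Tin w').shape) (k : ℕ) :
    (Tin (w.take k)).shape = (Tin (w'.take k)).shape := by
  induction w using maxSplit_induction generalizing w' k with
  | nil => rw [List.eq_nil_of_length_eq_zero (length_eq_of_shape_Tin_eq h).symm]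
  | split α m β hα hβ ihα ihβ =>
    obtain ⟨α', m', β', rfl, hα', hβ'⟩ := exists_eq_append_cons_max (ne_nil_of_shape_Tin_eq hα hβ h)
    rw [shape_Tin_append_cons hα hβ, shape_Tin_append_cons hα' hβ'] at h
    obtain ⟨hαα', -, hββ'⟩ := BTree.node.inj h
    have hlen : α.length = α'.length := length_eq_of_shape_Tin_eq hαα'
    rcases le_or_gt k α.length with hk | hk
    · rw [List.take_append_of_le_length hk, List.take_append_of_le_length (hlen ▸ hk)]
      exact ihα hαα' k
    obtain ⟨j, rfl⟩ := Nat.exists_eq_add_of_lt hk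
    rw [add_assoc, List.take_length_add_append, List.take_succ_cons, hlen,
      List.take_length_add_append, List.take_succ_cons,
      shape_Tin_append_cons hα fun x hx => hβ x (List.mem_of_mem_take hx),
      shape_Tin_append_cons hα' fun x hx => hβ' x (List.mem_of_mem_take hx), hαα', ihβ hββ' j]

theorem shape_Tin_drop_eq {w w' : List ℕ} (h : (Tin w).shape = (Tin w').shape) (k : ℕ) :
    (Tin (w.drop k)).shape = (Tin (w'.drop k)).shape := by
  induction w using maxSplit_induction generalizing w' k with
  | nil => rw [List.eq_nil_of_length_eq_zero (length_eq_of_shape_Tin_eq h).symm]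
  | split α m β hα hβ ihα ihβ =>
    obtain ⟨α', m', β', rfl, hα', hβ'⟩ := exists_eq_append_cons_max (ne_nil_of_shape_Tin_eq hα hβ h)
    rw [shape_Tin_append_cons hα hβ, shape_Tin_append_cons hα' hβ'] at h
    obtain ⟨hαα', -, hββ'⟩ := BTree.node.inj h
    have hlen : α.length = α'.length := length_eq_of_shape_Tin_eq hαα'
    rcases le_or_gt k α.length with hk | hk
    · rw [List.drop_append_of_le_length hk, List.drop_append_of_le_length (hlen ▸ hk),
        shape_Tin_append_cons (fun x hx => hα x (List.mem_of_mem_drop hx)) hβ,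
        shape_Tin_append_cons (fun x hx => hα' x (List.mem_of_mem_drop hx)) hβ', ihα hαα' k, hββ']
    obtain ⟨j, rfl⟩ := Nat.exists_eq_add_of_lt hk
    rw [add_assoc, List.drop_length_add_append, List.drop_succ_cons, hlen,
      List.drop_length_add_append, List.drop_succ_cons]
    exact ihβ hββ' j

/-- At each node the condition compares the node's label with the labels of an interval of `w`
ending at it, and intervals of `w` are prefixes of suffixes. -/
theorem decreasing_labelPostorder_congr {t : BTree} {w w' : List ℕ}
    (h : (Tin w).shape = (Tin w').shape) (hw : w.length = t.size) :
    (t.labelPostorder w).Decreasing ↔ (t.labelPostorder w').Decreasing := by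
  induction t generalizing w w' with
  | leaf => rfl
  | node l c r ihl ihr =>
    have hw' : w'.length = l.size + r.size + 1 := (length_eq_of_shape_Tin_eq h) ▸ hw
    rw [decreasing_labelPostorder_node_iff hw, decreasing_labelPostorder_node_iff hw',
      ihl (shape_Tin_take_eq h _) (by simp [hw, size]; omega),
      ihr (shape_Tin_take_eq (shape_Tin_drop_eq h _) _) (by simp [hw, size]; omega),
      forall_take_lt_getD_iff_shape_Tin hw', ← h, ← forall_take_lt_getD_iff_shape_Tin hw]

/-- The `stackSort`-preimage of `w` whose decreasing tree has shape `t`, if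
`t.labelPostorder w` is decreasing. -/
def preimageOfShape (t : BTree) (w : List ℕ) : List ℕ := (t.labelPostorder w).inorder

section preimageOfShape

variable {t : BTree} {w : List ℕ}

theorem Tin_preimageOfShape (hdec : (t.labelPostorder w).Decreasing) :
    Tin (preimageOfShape t w) = t.labelPostorder w :=
  Tin_inorder hdec

theorem stackSort_preimageOfShape (hw : w.length = t.size)
    (hdec : (t.labelPostorder w).Decreasing) : stackSort (preimageOfShape t w) = w := by
  rw [← postorder_Tin, Tin_preimageOfShape hdec, postorder_labelPostorder hw]

theorem shape_Tin_preimageOfShape (hdec : (t.labelPostorder w).Decreasing) :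
    (Tin (preimageOfShape t w)).shape = t.shape := by
  rw [Tin_preimageOfShape hdec, shape_labelPostorder]

theorem preimageOfShape_perm (hw : w.length = t.size) : (preimageOfShape t w).Perm w :=
  inorder_labelPostorder_perm hw

theorem preimageOfShape_shape_Tin (v : List ℕ) :
    preimageOfShape (Tin v).shape (stackSort v) = v := by
  rw [preimageOfShape, ← postorder_Tin, labelPostorder_shape_postorder, inorder_Tin]

theorem decreasing_labelPostorder_shape_Tin {v : List ℕ} (hv : v.Nodup) :
    ((Tin v).shape.labelPostorder (stackSort v)).Decreasing := by
  rw [← postorder_Tin, labelPostorder_shape_postorder]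
  exact decreasing_Tin hv

end preimageOfShape

open Finset

def permsOf (n : ℕ) : Finset (List ℕ) := (List.range' 1 n).permutations.toFinset

section permsOf

variable {n : ℕ} {θ : List ℕ}

theorem mem_permsOf : θ ∈ permsOf n ↔ θ.Perm (List.range' 1 n) := by
  simp [permsOf]

theorem length_of_mem_permsOf (h : θ ∈ permsOf n) : θ.length = n := by
  simpa using (mem_permsOf.1 h).length_eq

theorem nodup_of_mem_permsOf (h : θ ∈ permsOf n) : θ.Nodup :=
  (mem_permsOf.1 h).nodup_iff.2 List.nodup_range'

theorem reverse_mem_permsOf (h : θ ∈ permsOf n) : θ.reverse ∈ permsOf n :=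
  mem_permsOf.2 ((List.reverse_perm θ).trans (mem_permsOf.1 h))

theorem applyOps_perm (ops : List SOp) (θ : List ℕ) : (applyOps ops θ).Perm θ := by
  induction ops with
  | nil => rfl
  | cons op ops ih =>
    cases op
    exacts [(stackSort_perm _).trans ih, (List.reverse_perm _).trans ih]

def treeShapes (n : ℕ) : Finset BTree := (permsOf n).image fun v => (Tin v).shape

theorem size_of_mem_treeShapes {t : BTree} (ht : t ∈ treeShapes n) : t.size = n := by
  obtain ⟨v, hv, rfl⟩ := mem_image.1 ht
  simpa using length_of_mem_permsOf hv

theorem shape_of_mem_treeShapes {t : BTree} (ht : t ∈ treeShapes n) : t.shape = t := by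
  obtain ⟨v, -, rfl⟩ := mem_image.1 ht
  exact shape_shape _

theorem mirror_mem_treeShapes {t : BTree} (ht : t ∈ treeShapes n) : t.mirror ∈ treeShapes n := by
  obtain ⟨v, hv, rfl⟩ := mem_image.1 ht
  exact mem_image.2 ⟨v.reverse, reverse_mem_permsOf hv,
    by rw [Tin_reverse (nodup_of_mem_permsOf hv), shape_mirror]⟩

theorem length_eq_size_of_mem {t : BTree} (ht : t ∈ treeShapes n) (hθ : θ ∈ permsOf n) :
    θ.length = t.size := by
  rw [size_of_mem_treeShapes ht, length_of_mem_permsOf hθ]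

theorem preimageOfShape_mem_permsOf {t : BTree} (ht : t ∈ treeShapes n) {w : List ℕ}
    (hw : w ∈ permsOf n) : preimageOfShape t w ∈ permsOf n :=
  mem_permsOf.2 ((preimageOfShape_perm (length_eq_size_of_mem ht hw)).trans (mem_permsOf.1 hw))

theorem sum_stackSort_preimage {w : List ℕ} (hw : w ∈ permsOf n) (f : List ℕ → ℕ) :
    ∑ v ∈ permsOf n with stackSort v = w, f v =
      ∑ t ∈ treeShapes n with (t.labelPostorder w).Decreasing, f (preimageOfShape t w) := by
  refine sum_nbij' (fun v => (Tin v).shape) (fun t => preimageOfShape t w) ?_ ?_ ?_ ?_ ?_ <;>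
    simp only [mem_filter]
  · rintro v ⟨hv, rfl⟩
    exact ⟨mem_image_of_mem _ hv, decreasing_labelPostorder_shape_Tin (nodup_of_mem_permsOf hv)⟩
  · rintro t ⟨ht, hdec⟩
    exact ⟨preimageOfShape_mem_permsOf ht hw,
      stackSort_preimageOfShape (length_eq_size_of_mem ht hw) hdec⟩
  · rintro v ⟨-, rfl⟩
    exact preimageOfShape_shape_Tin v
  · rintro t ⟨ht, hdec⟩
    rw [shape_Tin_preimageOfShape hdec, shape_of_mem_treeShapes ht]
  · rintro v ⟨-, rfl⟩
    rw [preimageOfShape_shape_Tin]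

end permsOf

def fiberCard (ops : List SOp) (n : ℕ) (w : List ℕ) : ℕ := #{θ ∈ permsOf n | applyOps ops θ = w}

section fiberCard

variable {n : ℕ} {w w' : List ℕ}

theorem fiberCard_nil (hw : w ∈ permsOf n) : fiberCard [] n w = 1 := by
  change #{θ ∈ permsOf n | θ = w} = 1
  rw [filter_eq' (permsOf n) w, if_pos hw, card_singleton]

theorem fiberCard_cons_r (ops : List SOp) : fiberCard (.r :: ops) n w = fiberCard ops n w.reverse :=
  congrArg card (filter_congr fun _ _ => List.reverse_eq_iff)

theorem fiberCard_cons_s (ops : List SOp) :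
    fiberCard (.s :: ops) n w = ∑ v ∈ permsOf n with stackSort v = w, fiberCard ops n v := by
  rw [fiberCard, card_eq_sum_card_fiberwise (f := applyOps ops)
    (t := {v ∈ permsOf n | stackSort v = w})]
  · refine sum_congr rfl fun v hv => congrArg card ?_
    rw [filter_filter]
    refine filter_congr fun θ _ => ⟨And.right, fun h => ⟨?_, h⟩⟩
    change stackSort (applyOps ops θ) = w
    rw [h]
    exact (mem_filter.1 hv).2
  · intro θ hθ
    simp only [coe_filter, Set.mem_ofPred_eq] at hθ ⊢
    exact ⟨mem_permsOf.2 ((applyOps_perm ops θ).trans (mem_permsOf.1 hθ.1)), hθ.2⟩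

theorem fiberCard_congr (ops : List SOp) (hw : w ∈ permsOf n) (hw' : w' ∈ permsOf n)
    (h : (Tin w).shape = (Tin w').shape) : fiberCard ops n w = fiberCard ops n w' := by
  induction ops generalizing w w' with
  | nil => rw [fiberCard_nil hw, fiberCard_nil hw']
  | cons op ops ih =>
    cases op with
    | r =>
      rw [fiberCard_cons_r, fiberCard_cons_r]
      refine ih (reverse_mem_permsOf hw) (reverse_mem_permsOf hw') ?_
      rw [Tin_reverse (nodup_of_mem_permsOf hw), Tin_reverse (nodup_of_mem_permsOf hw'),
        shape_mirror, shape_mirror, h]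
    | s =>
      rw [fiberCard_cons_s, fiberCard_cons_s, sum_stackSort_preimage hw,
        sum_stackSort_preimage hw']
      rw [filter_congr fun t ht => decreasing_labelPostorder_congr h (length_eq_size_of_mem ht hw)]
      refine sum_congr rfl fun t ht => ?_
      obtain ⟨ht, hdec'⟩ := mem_filter.1 ht
      have hdec := (decreasing_labelPostorder_congr h (length_eq_size_of_mem ht hw)).2 hdec'
      exact ih (preimageOfShape_mem_permsOf ht hw) (preimageOfShape_mem_permsOf ht hw')
        (by rw [shape_Tin_preimageOfShape hdec, shape_Tin_preimageOfShape hdec'])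

end fiberCard

def sortedBy (F : List ℕ → List ℕ) (n : ℕ) : Finset (List ℕ) :=
  {θ ∈ permsOf n | stackSort (F θ) = List.range' 1 n}

theorem card_sortedBy_eq_card_sortedBy_reverse (ops : List SOp) (n : ℕ) :
    #(sortedBy (applyOps ops) n) = #(sortedBy (fun θ => (applyOps ops θ).reverse) n) := by
  have hid : List.range' 1 n ∈ permsOf n := mem_permsOf.2 (List.Perm.refl _)
  have hdec {t} (ht : t ∈ treeShapes n) : (t.labelPostorder (List.range' 1 n)).Decreasing :=
    decreasing_labelPostorder_of_pairwise (length_eq_size_of_mem ht hid) List.pairwise_lt_range'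
  have hmem {t} (ht : t ∈ treeShapes n) := preimageOfShape_mem_permsOf ht hid
  change fiberCard (.s :: ops) n _ = fiberCard (.s :: .r :: ops) n _
  rw [fiberCard_cons_s, fiberCard_cons_s, sum_stackSort_preimage hid, sum_stackSort_preimage hid,
    filter_true_of_mem fun t ht => hdec ht]
  simp only [fiberCard_cons_r]
  -- Mirroring the shape corresponds to reversing the permutation.
  refine sum_nbij' mirror mirror (fun t => mirror_mem_treeShapes) (fun t => mirror_mem_treeShapes)
    (fun t _ => mirror_mirror t) (fun t _ => mirror_mirror t) fun t ht =>
      fiberCard_congr ops (hmem ht) (reverse_mem_permsOf (hmem (mirror_mem_treeShapes ht))) ?_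
  rw [Tin_reverse (nodup_of_mem_permsOf (hmem (mirror_mem_treeShapes ht))), shape_mirror,
    shape_Tin_preimageOfShape (hdec ht),
    shape_Tin_preimageOfShape (hdec (mirror_mem_treeShapes ht)), shape_mirror, mirror_mirror]

section Graded

variable {β : Type*} [DecidableEq β] (size : β → ℕ) {s t : ℕ → Finset β}

def gradedMap (e : ∀ n, s n ≃ t n) (x : β) : β :=
  if h : x ∈ s (size x) then e (size x) ⟨x, h⟩ else x

variable {size}

theorem gradedMap_of_mem (e : ∀ n, s n ≃ t n) {n : ℕ} {x : β} (hx : x ∈ s n) (hn : size x = n) :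
    gradedMap size e x = e n ⟨x, hx⟩ := by
  subst hn
  simp [gradedMap, hx]

theorem gradedMap_mem (ht : ∀ n, ∀ y ∈ t n, size y = n) (e : ∀ n, s n ≃ t n) {x : β}
    (hx : x ∈ s (size x)) :
    size (gradedMap size e x) = size x ∧ gradedMap size e x ∈ t (size (gradedMap size e x)) := by
  rw [gradedMap_of_mem e hx rfl]
  have hmem := (e (size x) ⟨x, hx⟩).2
  exact ⟨ht _ _ hmem, by rwa [ht _ _ hmem]⟩

theorem gradedMap_symm_gradedMap (ht : ∀ n, ∀ y ∈ t n, size y = n) (e : ∀ n, s n ≃ t n) {x : β}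
    (hx : x ∈ s (size x)) : gradedMap size (fun n => (e n).symm) (gradedMap size e x) = x := by
  have hmem := (e (size x) ⟨x, hx⟩).2
  rw [gradedMap_of_mem e hx rfl, gradedMap_of_mem _ hmem (ht _ _ hmem)]
  simp

theorem exists_bijOn_of_card_eq (hs : ∀ n, ∀ x ∈ s n, size x = n)
    (ht : ∀ n, ∀ y ∈ t n, size y = n) (hcard : ∀ n, #(s n) = #(t n)) :
    ∃ Φ : β → β, Set.BijOn Φ {x | x ∈ s (size x)} {y | y ∈ t (size y)} ∧
      ∀ x ∈ s (size x), size (Φ x) = size x := by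
  let e n : s n ≃ t n := equivOfCardEq (hcard n)
  refine ⟨gradedMap size e, Set.InvOn.bijOn (f' := gradedMap size fun n => (e n).symm)
    ⟨fun x hx => gradedMap_symm_gradedMap ht e hx, fun y hy => gradedMap_symm_gradedMap hs
      (fun n => (e n).symm) hy⟩
    (fun x hx => (gradedMap_mem ht e hx).2) (fun y hy => (gradedMap_mem hs _ hy).2),
    fun x hx => (gradedMap_mem ht e hx).1⟩

end Graded

theorem insertionSort_eq_range' {θ : List ℕ} (hθ : θ.Perm (List.range' 1 θ.length)) :
    List.insertionSort (· ≤ ·) θ = List.range' 1 θ.length :=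
  List.Perm.eq_of_pairwise' (List.pairwise_insertionSort _ θ)
    (List.Pairwise.imp le_of_lt List.pairwise_lt_range') ((List.perm_insertionSort _ θ).trans hθ)

theorem mem_sortedBy_iff (F : List ℕ → List ℕ) (θ : List ℕ) :
    θ ∈ sortedBy F θ.length ↔
      θ.Perm (List.range' 1 θ.length) ∧ stackSort (F θ) = List.insertionSort (· ≤ ·) θ := by
  rw [sortedBy, mem_filter, mem_permsOf]
  exact and_congr_right fun hθ => by rw [insertionSort_eq_range' hθ]

/-- for any composition `A` of `S` and `R`, there is a
size-preserving bijection between the permutations sorted by `S ∘ A` and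
those sorted by `S ∘ R ∘ A`. -/
theorem sorting_bijection :
    ∀ ops : List SOp, ∃ Φ : List ℕ → List ℕ,
      Set.BijOn Φ
        {θ : List ℕ | θ.Perm (List.range' 1 θ.length) ∧
          stackSort (applyOps ops θ) = List.insertionSort (· ≤ ·) θ}
        {θ : List ℕ | θ.Perm (List.range' 1 θ.length) ∧
          stackSort ((applyOps ops θ).reverse) = List.insertionSort (· ≤ ·) θ} ∧
      ∀ θ : List ℕ, θ.Perm (List.range' 1 θ.length) →
        stackSort (applyOps ops θ) = List.insertionSort (· ≤ ·) θ →
        (Φ θ).length = θ.length := by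
  intro ops
  obtain ⟨Φ, hbij, hlen⟩ := exists_bijOn_of_card_eq (size := List.length)
    (fun _ _ hθ => length_of_mem_permsOf (mem_filter.1 hθ).1)
    (fun _ _ hθ => length_of_mem_permsOf (mem_filter.1 hθ).1)
    (card_sortedBy_eq_card_sortedBy_reverse ops)
  refine ⟨Φ, ?_, fun θ hθ hS => hlen θ ((mem_sortedBy_iff _ θ).2 ⟨hθ, hS⟩)⟩
  convert hbij using 1 <;> ext θ
  exacts [(mem_sortedBy_iff (applyOps ops) θ).symm,
    (mem_sortedBy_iff (fun θ => (applyOps ops θ).reverse) θ).symm]
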